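/- arXiv:0811.2800 — 3 statements merged into one kernel-verified Lean document; each statement's English description precedes it below -/
import Mathlib

section
/- If σ and τ are chip configurations on K_n with σ(v) + τ(v) = 2n-1 for all v, then a(σ) + a(τ) = 1, where a denotes the activity. -/
open Finset

/-- Number of unstable vertices of a chip configuration on `K n`. -/
def chipR (n : ℕ) (σ : Fin n → ℕ) : ℕ :=
  (Finset.univ.filter (fun v => n ≤ σ v)).card

/-- Parallel chip-firing update on the complete graph `K n`. -/
def chipU (n : ℕ) (σ : Fin n → ℕ) : Fin n → ℕ :=
  fun v => if n ≤ σ v then σ v + chipR n σ - n else σ v + chipR n σ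

/-- Total number of firings in the first `t` updates. -/
def chipAlpha (n : ℕ) (σ : Fin n → ℕ) (t : ℕ) : ℕ :=
  ∑ s ∈ Finset.range t, chipR n ((chipU n)^[s] σ)

/-- Number of times vertex `v` fires in the first `t` updates. -/
def odometer (n : ℕ) (σ : Fin n → ℕ) (t : ℕ) (v : Fin n) : ℕ :=
  ((Finset.range t).filter (fun s => n ≤ (chipU n)^[s] σ v)).card

/-- `a` is the activity of `σ`. -/
def Activity (n : ℕ) (σ : Fin n → ℕ) (a : ℝ) : Prop :=
  Filter.Tendsto (fun t : ℕ => (chipAlpha n σ t : ℝ) / (n * t)) Filter.atTop (nhds a)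

/-- A chip configuration is confined if all heights are at most `2n-1`
and the heights differ pairwise by at most `n-1`. -/
def Confined (n : ℕ) (σ : Fin n → ℕ) : Prop :=
  (∀ v, σ v ≤ 2 * n - 1) ∧ ∀ v w, σ v ≤ σ w + (n - 1)

/-- The eventual period: least `m ≥ 1` with `U^{t+m} σ = U^t σ` for all large `t`. -/
noncomputable def eventualPeriod (n : ℕ) (σ : Fin n → ℕ) : ℕ :=
  sInf {m | 1 ≤ m ∧ ∃ t₀, ∀ t ≥ t₀, (chipU n)^[t + m] σ = (chipU n)^[t] σ}

/-- The transient length of the dynamics started at `σ`. -/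
noncomputable def transientLength (n : ℕ) (σ : Fin n → ℕ) : ℕ :=
  sInf {t | ∃ t' > t, (chipU n)^[t'] σ = (chipU n)^[t] σ}

lemma chipR_dual (n : ℕ) (hn : 0 < n) (σ τ : Fin n → ℕ)
    (h : ∀ v, σ v + τ v = 2 * n - 1) : chipR n σ + chipR n τ = n := by
  unfold chipR
  have : (Finset.univ.filter fun v => n ≤ τ v)
      = Finset.univ.filter fun v : Fin n => ¬ n ≤ σ v := by
    ext v
    simp only [mem_filter, mem_univ, true_and]
    have := h v; omega
  rw [this, Finset.card_filter_add_card_filter_not, Finset.card_univ, Fintype.card_fin]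

lemma chipU_dual (n : ℕ) (hn : 0 < n) (σ τ : Fin n → ℕ)
    (h : ∀ v, σ v + τ v = 2 * n - 1) :
    ∀ v, chipU n σ v + chipU n τ v = 2 * n - 1 := by
  intro v
  have hr := chipR_dual n hn σ τ h
  have hv := h v
  unfold chipU
  by_cases hs : n ≤ σ v
  · have ht : ¬ n ≤ τ v := by omega
    simp only [hs, ht, if_true, if_false]
    omega
  · have ht : n ≤ τ v := by omega
    simp only [hs, ht, if_true, if_false]
    omega

lemma chipU_iter_dual (n : ℕ) (hn : 0 < n) (σ τ : Fin n → ℕ)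
    (h : ∀ v, σ v + τ v = 2 * n - 1) (s : ℕ) :
    ∀ v, (chipU n)^[s] σ v + (chipU n)^[s] τ v = 2 * n - 1 := by
  induction s with
  | zero => exact h
  | succ k ih =>
    rw [Function.iterate_succ_apply', Function.iterate_succ_apply']
    exact chipU_dual n hn _ _ ih

lemma chipAlpha_dual (n : ℕ) (hn : 0 < n) (σ τ : Fin n → ℕ)
    (h : ∀ v, σ v + τ v = 2 * n - 1) (t : ℕ) :
    chipAlpha n σ t + chipAlpha n τ t = n * t := by
  unfold chipAlpha
  rw [← Finset.sum_add_distrib]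
  have : ∀ s ∈ Finset.range t,
      chipR n ((chipU n)^[s] σ) + chipR n ((chipU n)^[s] τ) = n := fun s _ =>
    chipR_dual n hn _ _ (chipU_iter_dual n hn σ τ h s)
  rw [Finset.sum_congr rfl this, Finset.sum_const, Finset.card_range, smul_eq_mul, mul_comm]

theorem activities_sum_to_one (n : ℕ) (hn : 0 < n) (σ τ : Fin n → ℕ)
    (h : ∀ v, σ v + τ v = 2 * n - 1) (a b : ℝ)
    (ha : Activity n σ a) (hb : Activity n τ b) :
    a + b = 1 := by
  have hsum : Filter.Tendsto
      (fun t : ℕ => (chipAlpha n σ t : ℝ) / (n * t) + (chipAlpha n τ t : ℝ) / (n * t))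
      Filter.atTop (nhds (a + b)) := ha.add hb
  have hconst : Filter.Tendsto
      (fun t : ℕ => (chipAlpha n σ t : ℝ) / (n * t) + (chipAlpha n τ t : ℝ) / (n * t))
      Filter.atTop (nhds 1) := by
    apply Filter.Tendsto.congr' _ tendsto_const_nhds
    filter_upwards [Filter.eventually_ge_atTop 1] with t ht
    have halpha := chipAlpha_dual n hn σ τ h t
    have hnt : (n : ℝ) * t ≠ 0 := by positivity
    field_simp
    exact_mod_cast halpha.symm
  exact tendsto_nhds_unique hsum hconst
end

section
/- If σ is a confined chip configuration on K_n, then U^t σ = σ if and only if n divides α_t, where α_t = Σ_v u_t(σ,v) is the total number of firings in the first t updates. -/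
open Finset

lemma chipR_le (n : ℕ) (σ : Fin n → ℕ) : chipR n σ ≤ n := by
  have := Finset.card_filter_le (Finset.univ : Finset (Fin n)) (fun v => n ≤ σ v)
  simpa [chipR] using this

lemma conf_step (n : ℕ) (hn : 0 < n) (σ : Fin n → ℕ) (h : Confined n σ) :
    Confined n (chipU n σ) := by
  obtain ⟨h1, h2⟩ := h
  have hr := chipR_le n σ
  constructor
  · intro v
    have := h1 v
    simp only [chipU]
    split_ifs with hv <;> omega
  · intro v w
    have hvw := h2 v w
    have hv1 := h1 v
    simp only [chipU]
    split_ifs with hv hw hw <;> omega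

lemma conf_iter (n : ℕ) (hn : 0 < n) (σ : Fin n → ℕ) (h : Confined n σ) (t : ℕ) :
    Confined n ((chipU n)^[t] σ) := by
  induction t with
  | zero => simpa using h
  | succ t ih =>
    rw [Function.iterate_succ_apply']
    exact conf_step n hn _ ih

lemma chipU_int (n : ℕ) (τ : Fin n → ℕ) (v : Fin n) :
    (chipU n τ v : ℤ) = τ v + chipR n τ - if n ≤ τ v then (n : ℤ) else 0 := by
  simp only [chipU]
  split_ifs with hv
  · have : n ≤ τ v + chipR n τ := le_trans hv (Nat.le_add_right _ _)
    push_cast [Nat.cast_sub this]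
    ring
  · push_cast; ring

lemma alpha_succ (n : ℕ) (σ : Fin n → ℕ) (t : ℕ) :
    chipAlpha n σ (t + 1) = chipAlpha n σ t + chipR n ((chipU n)^[t] σ) := by
  simp [chipAlpha, Finset.sum_range_succ]

lemma odometer_succ (n : ℕ) (σ : Fin n → ℕ) (t : ℕ) (v : Fin n) :
    odometer n σ (t + 1) v =
      odometer n σ t v + if n ≤ (chipU n)^[t] σ v then 1 else 0 := by
  simp only [odometer, Finset.range_add_one, Finset.filter_insert]
  split_ifs with h
  · rw [Finset.card_insert_of_notMem (by simp)]
  · simp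

lemma height_eq (n : ℕ) (σ : Fin n → ℕ) (t : ℕ) (v : Fin n) :
    ((chipU n)^[t] σ v : ℤ) = σ v + chipAlpha n σ t - n * odometer n σ t v := by
  induction t with
  | zero => simp [chipAlpha, odometer]
  | succ t ih =>
    rw [Function.iterate_succ_apply', chipU_int, ih, alpha_succ, odometer_succ]
    push_cast
    split_ifs with h <;> ring

lemma sum_odometer (n : ℕ) (σ : Fin n → ℕ) (t : ℕ) :
    ∑ v : Fin n, odometer n σ t v = chipAlpha n σ t := by
  simp only [odometer, chipAlpha, chipR, Finset.card_filter]
  rw [Finset.sum_comm]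

theorem period_iff_divisibility (n : ℕ) (hn : 0 < n) (σ : Fin n → ℕ)
    (hconf : Confined n σ) (t : ℕ) :
    (chipU n)^[t] σ = σ ↔ n ∣ chipAlpha n σ t := by
  constructor
  · intro h
    have v : Fin n := ⟨0, hn⟩
    have hid := height_eq n σ t v
    rw [h] at hid
    have : (chipAlpha n σ t : ℤ) = n * odometer n σ t v := by linarith
    have : chipAlpha n σ t = n * odometer n σ t v := by exact_mod_cast this
    exact ⟨_, this⟩
  · rintro ⟨k, hk⟩
    have hconf' := conf_iter n hn σ hconf t
    -- step: odometer differences at most 1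
    have hstep : ∀ v w : Fin n,
        (odometer n σ t v : ℤ) ≤ odometer n σ t w + 1 := by
      intro v w
      have hv := height_eq n σ t v
      have hw := height_eq n σ t w
      have h1 : (σ v : ℤ) ≤ σ w + (n - 1 : ℕ) := by exact_mod_cast hconf.2 v w
      have h2 : ((chipU n)^[t] σ w : ℤ) ≤ (chipU n)^[t] σ v + (n - 1 : ℕ) := by
        exact_mod_cast hconf'.2 w v
      have hcast : ((n - 1 : ℕ) : ℤ) = n - 1 := by
        have : 1 ≤ n := hn
        push_cast [Nat.cast_sub this]; ring
      rw [hcast] at h1 h2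
      by_contra hcon
      push_neg at hcon
      have h3 : (odometer n σ t w : ℤ) + 2 ≤ odometer n σ t v := by linarith
      have h4 : (n : ℤ) * 2 ≤ n * ((odometer n σ t v : ℤ) - odometer n σ t w) := by
        have : (2 : ℤ) ≤ (odometer n σ t v : ℤ) - odometer n σ t w := by linarith
        exact mul_le_mul_of_nonneg_left this (by positivity)
      have hn' : (1 : ℤ) ≤ n := by exact_mod_cast hn
      nlinarith
    obtain ⟨v₀, -, hmin⟩ := Finset.exists_min_image Finset.univ (odometer n σ t)
      ⟨⟨0, hn⟩, Finset.mem_univ _⟩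
    have hsum : ∑ v : Fin n, (odometer n σ t v : ℤ) = n * k := by
      rw [← Nat.cast_sum, sum_odometer, hk]; push_cast; ring
    set u := fun v => (odometer n σ t v : ℤ) with hu
    have hsum2 : ∑ v : Fin n, (u v - u v₀) = n * (k - u v₀) := by
      rw [Finset.sum_sub_distrib, hsum]
      simp [Finset.card_univ]
      ring
    have hnonneg : ∀ v ∈ Finset.univ, (0 : ℤ) ≤ u v - u v₀ := by
      intro v _
      refine sub_nonneg.mpr ?_
      show (odometer n σ t v₀ : ℤ) ≤ odometer n σ t v
      exact_mod_cast hmin v (Finset.mem_univ v)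
    have hle1 : ∀ v ∈ Finset.univ, u v - u v₀ ≤ 1 := by
      intro v _
      have := hstep v v₀
      linarith [this]
    have hS0 : (0 : ℤ) ≤ n * (k - u v₀) := hsum2 ▸ Finset.sum_nonneg hnonneg
    have hSn : n * (k - u v₀) ≤ n := by
      rw [← hsum2]
      calc ∑ v : Fin n, (u v - u v₀) ≤ ∑ _v : Fin n, (1 : ℤ) :=
            Finset.sum_le_sum hle1
        _ = n := by simp [Finset.card_univ]
    have hn' : (1 : ℤ) ≤ n := by exact_mod_cast hn
    have hconst : ∀ v : Fin n, u v = k := by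
      have hcases : k - u v₀ = 0 ∨ k - u v₀ = 1 := by
        by_contra hc
        push_neg at hc
        rcases lt_or_gt_of_ne hc.1 with h | h
        · nlinarith
        · have : 2 ≤ k - u v₀ := by omega
          nlinarith
      rcases hcases with h | h
      · have hz : ∑ v : Fin n, (u v - u v₀) = 0 := by rw [hsum2, h]; ring
        have := (Finset.sum_eq_zero_iff_of_nonneg hnonneg).mp hz
        intro v
        have hv := this v (Finset.mem_univ v)
        have : u v = u v₀ := by linarith
        omega
      · -- each term is 1
        have hz : ∑ v : Fin n, (1 - (u v - u v₀)) = 0 := by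
          rw [Finset.sum_sub_distrib, hsum2, h]
          simp [Finset.card_univ]
        have := (Finset.sum_eq_zero_iff_of_nonneg
          (fun v hv => by linarith [hle1 v hv])).mp hz
        intro v
        have hv := this v (Finset.mem_univ v)
        omega
    funext v
    have hid := height_eq n σ t v
    have : ((chipU n)^[t] σ v : ℤ) = σ v := by
      rw [hid, hk]
      push_cast
      rw [show ((odometer n σ t v : ℤ)) = k from hconst v]
      ring
    exact_mod_cast this
end

section
/- Let η : [0,1] → [0,∞) be measurable and preconfined (η(x) < 2 for all x) with β_t = Σ_{s=0}^{t-1} r(U^s η). Suppose U^t η is preconfined. Then for x ∈ [0,1], U^{t+1}η(x) ≥ 1 if and only if η(x) ∈ ℤ - (β_t, β_{t+1}], i.e., m - η(x) ∈ (β_t, β_{t+1}] for some integer m. -/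
open MeasureTheory

/-- The fraction of unstable sites of a generalized chip configuration `η : [0,1] → [0,∞)`. -/
noncomputable def genR (η : ℝ → ℝ) : ℝ :=
  (volume {x ∈ Set.Icc (0:ℝ) 1 | 1 ≤ η x}).toReal

/-- The parallel update rule for generalized chip configurations. -/
noncomputable def genU (η : ℝ → ℝ) : ℝ → ℝ :=
  fun x => η x + genR η - if 1 ≤ η x then 1 else 0

lemma genR_nonneg (η : ℝ → ℝ) : 0 ≤ genR η := ENNReal.toReal_nonneg

lemma genR_le_one (η : ℝ → ℝ) : genR η ≤ 1 := by
  have h : volume {x ∈ Set.Icc (0:ℝ) 1 | 1 ≤ η x} ≤ volume (Set.Icc (0:ℝ) 1) :=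
    measure_mono (fun y hy => hy.1)
  have hv : volume (Set.Icc (0:ℝ) 1) = 1 := by simp
  have := ENNReal.toReal_mono (by simp [hv]) h
  simpa [genR, hv] using this

theorem which_sites_are_unstable (η : ℝ → ℝ) (hmeas : Measurable η)
    (hpre : ∀ x ∈ Set.Icc (0:ℝ) 1, 0 ≤ η x ∧ η x < 2)
    (β : ℕ → ℝ) (hβ : ∀ t, β t = ∑ s ∈ Finset.range t, genR (genU^[s] η))
    (t : ℕ) (hpret : ∀ x ∈ Set.Icc (0:ℝ) 1, 0 ≤ genU^[t] η x ∧ genU^[t] η x < 2) :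
    ∀ x ∈ Set.Icc (0:ℝ) 1,
      (1 ≤ genU^[t + 1] η x ↔ ∃ m : ℤ, (m : ℝ) - η x ∈ Set.Ioc (β t) (β (t + 1))) := by
  intro x hx
  obtain ⟨hξ0, hξ2⟩ := hpret x hx
  have hr0 : 0 ≤ genR (genU^[t] η) := genR_nonneg _
  have hr1 : genR (genU^[t] η) ≤ 1 := genR_le_one _
  have hβsucc : β (t + 1) = β t + genR (genU^[t] η) := by
    rw [hβ, hβ, Finset.sum_range_succ]
  -- the iterate differs from η x + β s by an integer
  have key : ∀ s : ℕ, ∃ k : ℤ, genU^[s] η x = η x + β s - k := by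
    intro s
    induction s with
    | zero => exact ⟨0, by simp [hβ]⟩
    | succ n ih =>
      obtain ⟨k, hk⟩ := ih
      have hβn : β (n + 1) = β n + genR (genU^[n] η) := by
        rw [hβ, hβ, Finset.sum_range_succ]
      rw [Function.iterate_succ_apply']
      by_cases h : 1 ≤ genU^[n] η x
      · refine ⟨k + 1, ?_⟩
        simp only [genU]; rw [if_pos h, hk, hβn]; push_cast; ring
      · refine ⟨k, ?_⟩
        simp only [genU]; rw [if_neg h, hk, hβn]; ring
  obtain ⟨k, hk⟩ := key t
  rw [Function.iterate_succ_apply']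
  set ξ := genU^[t] η x with hξdef
  set r := genR (genU^[t] η) with hrdef
  have hηx : η x = ξ - β t + k := by rw [hk]; ring
  constructor
  · intro h1
    by_cases h : 1 ≤ ξ
    · refine ⟨k + 2, ?_⟩
      simp only [genU, ← hξdef, ← hrdef, if_pos h] at h1
      constructor
      · push_cast [hηx]; linarith
      · rw [hβsucc]; push_cast [hηx]; linarith
    · refine ⟨k + 1, ?_⟩
      simp only [genU, ← hξdef, ← hrdef, if_neg h] at h1
      constructor
      · push_cast [hηx]; linarith [not_le.mp h]
      · rw [hβsucc]; push_cast [hηx]; linarith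
  · rintro ⟨m, hm1, hm2⟩
    rw [hβsucc] at hm2
    rw [hηx] at hm1 hm2
    -- so ξ < m - k ≤ ξ + r
    have h1 : ξ < (m : ℝ) - k := by linarith
    have h2 : (m : ℝ) - k ≤ ξ + r := by linarith
    have hn1 : (0 : ℤ) < m - k := by
      by_contra hc
      push_neg at hc
      have : ((m - k : ℤ) : ℝ) ≤ 0 := by exact_mod_cast hc
      push_cast at this; linarith
    have hn2 : m - k < 3 := by
      have : ((m - k : ℤ) : ℝ) < 3 := by push_cast; linarith
      exact_mod_cast this
    have hcase : m - k = 1 ∨ m - k = 2 := by omega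
    rcases hcase with hmk | hmk
    · have hmr : (m : ℝ) - k = 1 := by
        have : ((m - k : ℤ) : ℝ) = 1 := by rw [hmk]; norm_num
        push_cast at this; linarith
      have hlt : ξ < 1 := by rw [← hmr]; exact h1
      simp only [genU, ← hξdef, ← hrdef, if_neg (not_le.mpr hlt)]
      linarith
    · have hmr : (m : ℝ) - k = 2 := by
        have : ((m - k : ℤ) : ℝ) = 2 := by rw [hmk]; norm_num
        push_cast at this; linarith
      have hge : 1 ≤ ξ := by linarith
      simp only [genU, ← hξdef, ← hrdef, if_pos hge]
      linarith
end
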